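/- arXiv:2309.03974 — 7 statements merged into one kernel-verified Lean document; each statement's English description precedes it below -/
import Mathlib

section
/- The LOORF estimator can be decomposed as Reinforce plus a discrepancy correction: (1/n)·Σ_{i=1}^n (f(x_i) - (1/(n-1))·Σ_{j≠i} f(x_j))·(x_i - p) = (1/(n-1))·Σ_{i=1}^n f(x_i)·(x_i - p) - (p̂ - p)·(1/(n-1))·Σ_{i=1}^n f(x_i), where p̂ = (1/n)·Σ_{i=1}^n x_i. -/
/-!
With `c = (n - 1)⁻¹` and `S = ∑ j, f (x j)`, the leave-one-out weight is
`f (x i) - c (S - f (x i)) = n c f (x i) - c S`, since `1 + c = n c`. Averaging over `i`, the first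
part gives the Reinforce term `c ∑ i, f (x i) (x i - p)` and the second gives `c S (p̂ - p)`.
-/

open Finset

section LeaveOneOut

variable {ι 𝕜 E : Type*} [Fintype ι] [Field 𝕜] [AddCommGroup E] [Module 𝕜 E]

theorem inv_card_smul_sum_sub_const (hn : (Fintype.card ι : 𝕜) ≠ 0) (v : ι → E) (p : E) :
    (Fintype.card ι : 𝕜)⁻¹ • ∑ i, (v i - p) = (Fintype.card ι : 𝕜)⁻¹ • ∑ i, v i - p := by
  rw [sum_sub_distrib, sum_const, card_univ, ← Nat.cast_smul_eq_nsmul 𝕜, smul_sub, smul_smul,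
    inv_mul_cancel₀ hn, one_smul]

theorem sub_leaveOneOut_eq [DecidableEq ι] {N : 𝕜} (hN : N - 1 ≠ 0) (a : ι → 𝕜) (i : ι) :
    a i - (N - 1)⁻¹ * ∑ j ∈ univ.erase i, a j = N * (N - 1)⁻¹ * a i - (N - 1)⁻¹ * ∑ j, a j := by
  rw [sum_erase_eq_sub (mem_univ i)]
  field_simp
  ring

theorem inv_card_smul_sum_leaveOneOut_smul [DecidableEq ι] (hn : (Fintype.card ι : 𝕜) ≠ 0)
    (hn1 : (Fintype.card ι : 𝕜) - 1 ≠ 0) (a : ι → 𝕜) (v : ι → E) (p : E) :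
    (Fintype.card ι : 𝕜)⁻¹ •
        ∑ i, (a i - ((Fintype.card ι : 𝕜) - 1)⁻¹ * ∑ j ∈ univ.erase i, a j) • (v i - p)
      = ((Fintype.card ι : 𝕜) - 1)⁻¹ • ∑ i, a i • (v i - p)
        - (((Fintype.card ι : 𝕜) - 1)⁻¹ * ∑ i, a i) •
            ((Fintype.card ι : 𝕜)⁻¹ • ∑ i, v i - p) := by
  rw [← inv_card_smul_sum_sub_const hn]
  simp only [sub_leaveOneOut_eq hn1, sub_smul, sum_sub_distrib, mul_smul, ← smul_sum]
  match_scalars <;> field_simp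

end LeaveOneOut

/-- LOORF = Reinforce + discrepancy correction (algebraic identity in ℝ^d). -/
theorem loorf_eq_reinforce_sub_discrepancy (n d : ℕ) (hn : 2 ≤ n)
    (x : Fin n → Fin d → ℝ) (p : Fin d → ℝ) (f : (Fin d → ℝ) → ℝ) :
    ((n : ℝ)⁻¹) • ∑ i, (f (x i) - ((n : ℝ) - 1)⁻¹ * ∑ j ∈ Finset.univ.erase i, f (x j)) • (x i - p)
      = ((n : ℝ) - 1)⁻¹ • (∑ i, f (x i) • (x i - p))
        - (((n : ℝ) - 1)⁻¹ * ∑ i, f (x i)) • ((((n : ℝ)⁻¹) • ∑ i, x i) - p) := by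
  have hn' : (2 : ℝ) ≤ n := by exact_mod_cast hn
  have h := inv_card_smul_sum_leaveOneOut_smul (𝕜 := ℝ) (ι := Fin n)
    (by rw [Fintype.card_fin]; positivity) (by rw [Fintype.card_fin]; linarith)
    (fun i => f (x i)) x p
  simpa only [Fintype.card_fin] using h
end

section
/- The LOORF estimator is unbiased for independent samples with common mean distribution: if x_1, ..., x_n are i.i.d. Bernoulli(p) with n ≥ 2 and f : {0,1} → ℝ, then E[(1/n)·Σ_{i=1}^n (f(x_i) - (1/(n-1))·Σ_{j≠i} f(x_j))·(x_i - p)] = (f(1) - f(0))·p·(1-p). -/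
/-! The estimator's expectation is linear, so it splits into the diagonal terms
`E[f(xᵢ)(xᵢ - p)] = (f 1 - f 0) p (1 - p)` and the control-variate terms `E[f(xⱼ)(xᵢ - p)]`, `j ≠ i`,
which vanish because under a product weight they factor as `E[f(xⱼ)] · E[xᵢ - p] = 0`. -/

open Finset

/-- Value in ℝ of a Bernoulli outcome. -/
noncomputable def b2r (b : Bool) : ℝ := if b then 1 else 0

section piExpect

variable {ι α R : Type*} [Fintype ι] [DecidableEq ι] [Fintype α] [CommSemiring R]

def piExpect (μ : α → R) : ((ι → α) → R) →ₗ[R] R where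
  toFun F := ∑ x, (∏ k, μ (x k)) * F x
  map_add' F G := by simp only [Pi.add_apply, mul_add, sum_add_distrib]
  map_smul' c F := by
    simp only [Pi.smul_apply, smul_eq_mul, RingHom.id_apply, mul_sum]
    exact sum_congr rfl fun _ _ => by ring

theorem piExpect_apply (μ : α → R) (F : (ι → α) → R) :
    piExpect μ F = ∑ x, (∏ k, μ (x k)) * F x := rfl

theorem piExpect_prod_univ (μ : α → R) (h : ι → α → R) :
    piExpect μ (fun x => ∏ k, h k (x k)) = ∏ k, ∑ a, μ a * h k a := by
  simp only [piExpect_apply, ← prod_mul_distrib]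
  exact (Fintype.prod_sum fun k a => μ a * h k a).symm

variable {μ : α → R}

theorem piExpect_prod (hμ : ∑ a, μ a = 1) (s : Finset ι) (h : ι → α → R) :
    piExpect μ (fun x => ∏ k ∈ s, h k (x k)) = ∏ k ∈ s, ∑ a, μ a * h k a := by
  have := piExpect_prod_univ μ fun k a => if k ∈ s then h k a else 1
  simpa [apply_ite, mul_ite, hμ, prod_ite_mem] using this

theorem piExpect_comp_eval (hμ : ∑ a, μ a = 1) (i : ι) (g : α → R) :
    piExpect μ (fun x => g (x i)) = ∑ a, μ a * g a := by
  simpa using piExpect_prod hμ {i} fun _ => g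

theorem piExpect_comp_eval_mul_comp_eval (hμ : ∑ a, μ a = 1) {i j : ι} (hij : i ≠ j)
    (g h : α → R) :
    piExpect μ (fun x => g (x i) * h (x j)) = (∑ a, μ a * g a) * ∑ a, μ a * h a := by
  simpa [prod_pair hij, hij.symm] using piExpect_prod hμ {i, j} fun k => if k = i then g else h

end piExpect

def bernoulliWeight {R : Type*} [Ring R] (p : R) (b : Bool) : R := if b then p else 1 - p

theorem sum_bernoulliWeight {R : Type*} [Ring R] (p : R) : ∑ b, bernoulliWeight p b = 1 := by
  simp [bernoulliWeight]

theorem sum_bernoulliWeight_mul_centered (p : ℝ) :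
    ∑ b, bernoulliWeight p b * (b2r b - p) = 0 := by
  simp [bernoulliWeight, b2r]; ring

theorem sum_bernoulliWeight_mul_mul_centered (p : ℝ) (g : ℝ → ℝ) :
    ∑ b, bernoulliWeight p b * (g (b2r b) * (b2r b - p)) = (g 1 - g 0) * p * (1 - p) := by
  simp [bernoulliWeight, b2r]; ring

theorem loorf_unbiased_general (n : ℕ) (hn : 2 ≤ n) (p : ℝ)
    (f : ℝ → ℝ) :
    ∑ x : Fin n → Bool,
        (∏ i, (if x i then p else 1 - p)) *
          ((n : ℝ)⁻¹ * ∑ i,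
            (f (b2r (x i)) - ((n : ℝ) - 1)⁻¹ * ∑ j ∈ Finset.univ.erase i, f (b2r (x j))) *
              (b2r (x i) - p))
      = (f 1 - f 0) * p * (1 - p) := by
  set E := piExpect (ι := Fin n) (bernoulliWeight p)
  have hμ := sum_bernoulliWeight p
  have diagonal (i : Fin n) :
      E (fun x => f (b2r (x i)) * (b2r (x i) - p)) = (f 1 - f 0) * p * (1 - p) := by
    rw [piExpect_comp_eval hμ i fun b => f (b2r b) * (b2r b - p),
      sum_bernoulliWeight_mul_mul_centered]
  have offDiagonal (i j : Fin n) (hij : j ≠ i) :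
      E (fun x => f (b2r (x j)) * (b2r (x i) - p)) = 0 := by
    rw [piExpect_comp_eval_mul_comp_eval hμ hij (fun b => f (b2r b)) fun b => b2r b - p,
      sum_bernoulliWeight_mul_centered, mul_zero]
  have hn0 : (n : ℝ) ≠ 0 := by exact_mod_cast (by omega : n ≠ 0)
  calc _ = E ((n : ℝ)⁻¹ • ∑ i, ((fun x => f (b2r (x i)) * (b2r (x i) - p)) -
              ((n : ℝ) - 1)⁻¹ • ∑ j ∈ univ.erase i, fun x => f (b2r (x j)) * (b2r (x i) - p))) := by
        rw [piExpect_apply]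
        refine sum_congr rfl fun x _ => ?_
        simp [bernoulliWeight, Finset.sum_apply, sub_mul, sum_mul, mul_assoc]
    _ = (n : ℝ)⁻¹ * ∑ _i : Fin n, (f 1 - f 0) * p * (1 - p) := by
        simp only [map_smul, map_sum, map_sub, smul_eq_mul]
        refine congrArg _ (sum_congr rfl fun i _ => ?_)
        rw [diagonal, sum_congr rfl fun j hj => offDiagonal i j (ne_of_mem_erase hj)]
        simp
    _ = (f 1 - f 0) * p * (1 - p) := by
        rw [sum_const, card_univ, Fintype.card_fin, nsmul_eq_mul, inv_mul_cancel_left₀ hn0]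

/-- the LOORF estimator is unbiased for i.i.d. Bernoulli(p) samples:
its expectation (under the i.i.d. product distribution) equals (f(1)-f(0))·p·(1-p). -/
theorem loorf_unbiased (n : ℕ) (hn : 2 ≤ n) (p : ℝ) (hp0 : 0 < p) (hp1 : p < 1)
    (f : ℝ → ℝ) :
    ∑ x : Fin n → Bool,
        (∏ i, (if x i then p else 1 - p)) *
          ((n : ℝ)⁻¹ * ∑ i,
            (f (b2r (x i)) - ((n : ℝ) - 1)⁻¹ * ∑ j ∈ Finset.univ.erase i, f (b2r (x j))) *
              (b2r (x i) - p))
      = (f 1 - f 0) * p * (1 - p) :=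
  loorf_unbiased_general n hn p f
end

section
/- Distribution preservation of DBsample (general n, 1-dimensional case): let p ∈ (0,1), n ∈ ℕ, and 0 ≤ α ≤ min((1-p)/p, p/(1-p)). Define the sampling process: q_1 = p, x_k ~ Bernoulli(q_k) conditionally on the past, p̂_k = (1/k)·Σ_{j≤k} x_j, and q_{k+1} = clip(p(1+α) - α·p̂_k, 0, 1). Then for all k ∈ {1,...,n}: (i) q_k = p(1+α) - α·p̂_{k-1} (no clipping occurs), and (ii) E[x_k] = p. -/
open Finset

/-- Empirical mean p̂ₖ of the first k samples (0-based: samples x₀, …, x_{k-1}). -/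
noncomputable def phat {n : ℕ} (x : Fin n → Bool) (k : ℕ) : ℝ :=
  (k : ℝ)⁻¹ * ∑ j : Fin n, if (j : ℕ) < k ∧ x j = true then (1 : ℝ) else 0

/-- Parameter used by DBsample at (0-based) step k:
q₀ = p and q_k = clip(p(1+α) - α·p̂ₖ, 0, 1) for k ≥ 1. -/
noncomputable def dbq {n : ℕ} (p α : ℝ) (x : Fin n → Bool) (k : ℕ) : ℝ :=
  if k = 0 then p else min 1 (max 0 (p * (1 + α) - α * phat x k))

/-- Joint density of the n DBsample draws. -/
noncomputable def dbDens {n : ℕ} (p α : ℝ) (x : Fin n → Bool) : ℝ :=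
  ∏ k : Fin n, (if x k then dbq p α x (k : ℕ) else 1 - dbq p α x (k : ℕ))

/-!
Since `p̂ ∈ [0, 1]` and the two bounds on `α` say `p (1 + α) ≤ 1` and `p (1 + α) - α ≥ 0`, the
clip in `dbq` is never active.

The density is a product of Bernoulli factors whose parameters `q k` depend only on the earlier
draws. A factor sums to one over the flip of its own coordinate, so summing out the draws after
step `k` gives the tower identity `E[x k] = E[q k]`. As `q k` is affine in
`p̂ k = (1/k) ∑_{j<k} x j`, strong induction on `k` yields `E[x k] = p (1 + α) - α p = p`.
-/

open Function

theorem DependsOn.apply_update_of_notMem {ι β : Type*} {α : ι → Type*} [DecidableEq ι]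
    {f : (Π i, α i) → β} {s : Set ι} (hf : DependsOn f s) {i : ι} (hi : i ∉ s)
    (x : Π i, α i) (a : α i) : f (Function.update x i a) = f x :=
  hf fun _ hj => update_of_ne (ne_of_mem_of_not_mem hj hi) _ _

theorem DependsOn.mul {ι : Type*} {α : ι → Type*} {f g : (Π i, α i) → ℝ} {s : Set ι}
    (hf : DependsOn f s) (hg : DependsOn g s) : DependsOn (fun x => f x * g x) s :=
  fun _ _ h => by simp only [hf h, hg h]

theorem sum_mul_eq_half_sum {ι : Type*} [Fintype ι] [DecidableEq ι] {i : ι}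
    {h g : (ι → Bool) → ℝ} (hh : DependsOn h {i}ᶜ)
    (hg : ∀ x, g x + g (update x i (!x i)) = 1) :
    ∑ x, h x * g x = (∑ x, h x) / 2 := by
  have hflip_invol : Involutive fun x : ι → Bool => update x i (!x i) := by
    intro x
    simp
  have hflip : ∑ x, h x * g x = ∑ x, h x * g (update x i (!x i)) :=
    Fintype.sum_equiv (hflip_invol.toPerm _) _ _ fun x => by
      simp [hh.apply_update_of_notMem (i := i) (by simp)]
  have htwice : 2 * ∑ x, h x * g x = ∑ x, h x := by
    rw [two_mul]
    nth_rw 2 [hflip]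
    rw [← sum_add_distrib]
    exact sum_congr rfl fun x _ => by rw [← mul_add, hg, mul_one]
  linarith

section SequentialBernoulli

variable {n : ℕ} (q : Fin n → (Fin n → Bool) → ℝ)

noncomputable def bernWeight (k : Fin n) (x : Fin n → Bool) : ℝ :=
  if x k then q k x else 1 - q k x

/-- Fair coins stand in for the draws after step `m`, so that summing out a draw leaves the
total mass unchanged. -/
noncomputable def prefixDens (m : ℕ) (x : Fin n → Bool) : ℝ :=
  ∏ k : Fin n, if (k : ℕ) < m then bernWeight q k x else 1 / 2

theorem prefixDens_succ {m : ℕ} (hm : m < n) (x : Fin n → Bool) :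
    prefixDens q (m + 1) x = 2 * bernWeight q ⟨m, hm⟩ x * prefixDens q m x := by
  have hmem : (⟨m, hm⟩ : Fin n) ∈ univ := mem_univ _
  have hrest :
      ∏ k ∈ univ.erase (⟨m, hm⟩ : Fin n), (if (k : ℕ) < m + 1 then bernWeight q k x else 1 / 2)
        = ∏ k ∈ univ.erase (⟨m, hm⟩ : Fin n), (if (k : ℕ) < m then bernWeight q k x else 1 / 2) :=
    prod_congr rfl fun k hk => by
      have hkm : (k : ℕ) ≠ m := fun h => (mem_erase.1 hk).1 (Fin.ext h)
      simp only [show (k : ℕ) < m + 1 ↔ (k : ℕ) < m by omega]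
  unfold prefixDens
  rw [← mul_prod_erase _ _ hmem, ← mul_prod_erase _ _ hmem, hrest]
  simp only [Nat.lt_succ_self, lt_irrefl, ↓reduceIte]
  ring

theorem bernWeight_mul_b2r (k : Fin n) (x : Fin n → Bool) :
    bernWeight q k x * b2r (x k) = q k x * b2r (x k) := by
  rw [bernWeight]
  cases x k <;> simp [b2r]

variable {q} (hq : ∀ k, DependsOn (q k) (Set.Iio k))
include hq

theorem bernWeight_dependsOn (k : Fin n) : DependsOn (bernWeight q k) (Set.Iic k) := by
  intro x y h
  rw [bernWeight, bernWeight, h k (Set.mem_Iic.2 le_rfl),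
    hq k fun i hi => h i (Set.Iio_subset_Iic_self hi)]

theorem prefixDens_dependsOn (m : ℕ) : DependsOn (prefixDens q m) {i | (i : ℕ) < m} :=
  fun x y h => prod_congr rfl fun k _ => by
    split_ifs with hk
    · exact bernWeight_dependsOn hq k fun i hi => h i (lt_of_le_of_lt hi hk)
    · rfl

theorem bernWeight_add_flip (k : Fin n) (x : Fin n → Bool) :
    bernWeight q k x + bernWeight q k (update x k (!x k)) = 1 := by
  rw [bernWeight, bernWeight, (hq k).apply_update_of_notMem (lt_irrefl k)]
  cases x k <;> simp

theorem sum_prefixDens_succ_mul {m : ℕ} (hm : m < n) {G : (Fin n → Bool) → ℝ}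
    (hG : DependsOn G {⟨m, hm⟩}ᶜ) :
    ∑ x, prefixDens q (m + 1) x * G x = ∑ x, prefixDens q m x * G x := by
  have hPG : DependsOn (fun x => prefixDens q m x * G x) {⟨m, hm⟩}ᶜ :=
    ((prefixDens_dependsOn hq m).mono fun (i : Fin n) (hi : (i : ℕ) < m) => by
      simp [Fin.ext_iff, hi.ne]).mul hG
  calc ∑ x, prefixDens q (m + 1) x * G x
      = 2 * ∑ x, prefixDens q m x * G x * bernWeight q ⟨m, hm⟩ x := by
        rw [mul_sum]
        exact sum_congr rfl fun x _ => by rw [prefixDens_succ q hm]; ring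
    _ = ∑ x, prefixDens q m x * G x := by
        rw [sum_mul_eq_half_sum hPG (bernWeight_add_flip hq _)]
        ring

theorem sum_prefixDens_mul_of_dependsOn {m m' : ℕ} (hmm' : m ≤ m') (hm' : m' ≤ n)
    {G : (Fin n → Bool) → ℝ} (hG : DependsOn G {i | (i : ℕ) < m}) :
    ∑ x, prefixDens q m' x * G x = ∑ x, prefixDens q m x * G x := by
  induction m', hmm' using Nat.le_induction with
  | base => rfl
  | succ m' hmm' ih =>
    rw [sum_prefixDens_succ_mul hq hm' (hG.mono fun i hi => by grind [Fin.ext_iff]),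
      ih (by omega)]

theorem sum_prefixDens_eq_one : ∑ x, prefixDens q n x = 1 := by
  simpa [prefixDens] using sum_prefixDens_mul_of_dependsOn hq (Nat.zero_le n) le_rfl
    ((dependsOn_const (1 : ℝ)).mono (Set.empty_subset _))

theorem sum_prefixDens_mul_b2r (k : Fin n) :
    ∑ x, prefixDens q n x * b2r (x k) = ∑ x, prefixDens q n x * q k x := by
  have hcoord : DependsOn (fun x : Fin n → Bool => b2r (x k)) {i | (i : ℕ) < k + 1} :=
    fun x y h => congrArg b2r (h k (by simp))
  have hflip (x : Fin n → Bool) : b2r (x k) + b2r (update x k (!x k) k) = 1 := by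
    cases x k <;> simp [b2r]
  have hPq : DependsOn (fun x => prefixDens q k x * q k x) {k}ᶜ :=
    ((prefixDens_dependsOn hq k).mono fun i hi => by grind [Fin.ext_iff]).mul
      ((hq k).mono fun i hi => by grind)
  calc ∑ x, prefixDens q n x * b2r (x k)
      = ∑ x, prefixDens q (k + 1) x * b2r (x k) :=
        sum_prefixDens_mul_of_dependsOn hq (by omega) le_rfl hcoord
    _ = 2 * ∑ x, prefixDens q k x * q k x * b2r (x k) := by
        rw [mul_sum]
        refine sum_congr rfl fun x _ => ?_
        rw [prefixDens_succ q k.isLt]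
        linear_combination 2 * prefixDens q k x * bernWeight_mul_b2r q k x
    _ = ∑ x, prefixDens q k x * q k x := by
        rw [sum_mul_eq_half_sum hPq hflip]
        ring
    _ = ∑ x, prefixDens q n x * q k x :=
        (sum_prefixDens_mul_of_dependsOn hq (by omega) le_rfl
          ((hq k).mono fun i hi => hi)).symm

end SequentialBernoulli

section DBsample

variable {n : ℕ}

theorem b2r_le_one (b : Bool) : b2r b ≤ 1 := by
  cases b <;> simp [b2r]

theorem phat_eq_sum (x : Fin n → Bool) (k : ℕ) :
    phat x k = (k : ℝ)⁻¹ * ∑ j ∈ {j : Fin n | ↑j < k}, b2r (x j) := by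
  rw [phat, sum_filter]
  congr 1
  refine sum_congr rfl fun j _ => ?_
  by_cases hj : (j : ℕ) < k <;> cases x j <;> simp [hj, b2r]

theorem phat_nonneg (x : Fin n → Bool) (k : ℕ) : 0 ≤ phat x k := by
  unfold phat
  positivity

theorem phat_le_one (x : Fin n → Bool) (k : ℕ) : phat x k ≤ 1 := by
  rw [phat_eq_sum]
  refine inv_mul_le_one_of_le₀ ?_ (Nat.cast_nonneg k)
  calc ∑ j ∈ {j : Fin n | ↑j < k}, b2r (x j)
      ≤ ∑ j ∈ {j : Fin n | ↑j < k}, (1 : ℝ) := sum_le_sum fun j _ => b2r_le_one _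
    _ = (min n k : ℕ) := by simp [Fin.card_filter_val_lt]
    _ ≤ k := by exact_mod_cast min_le_right n k

theorem phat_dependsOn (k : ℕ) :
    DependsOn (fun x : Fin n → Bool => phat x k) {i | (i : ℕ) < k} := fun x y h => by
  simp only [phat_eq_sum]
  congr 1
  exact sum_congr rfl fun j hj => by rw [h j (mem_filter.1 hj).2]

theorem dbq_dependsOn (p α : ℝ) (k : Fin n) :
    DependsOn (fun x => dbq p α x k) (Set.Iio k) := fun x y h => by
  simp only [dbq, phat_dependsOn k h]

theorem dbDens_eq_prefixDens (p α : ℝ) (x : Fin n → Bool) :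
    dbDens p α x = prefixDens (fun k x => dbq p α x k) n x :=
  prod_congr rfl fun k _ => by rw [if_pos k.isLt]; rfl

theorem sum_dbDens_eq_one (p α : ℝ) : ∑ x : Fin n → Bool, dbDens p α x = 1 := by
  simp_rw [dbDens_eq_prefixDens]
  exact sum_prefixDens_eq_one (dbq_dependsOn p α)

theorem sum_dbDens_mul_b2r_eq_sum_mul_dbq (p α : ℝ) (k : Fin n) :
    ∑ x : Fin n → Bool, dbDens p α x * b2r (x k)
      = ∑ x : Fin n → Bool, dbDens p α x * dbq p α x k := by
  simp_rw [dbDens_eq_prefixDens]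
  exact sum_prefixDens_mul_b2r (dbq_dependsOn p α) k

theorem sum_dbDens_mul_phat (p α : ℝ) {m : ℕ} (hm : m ≤ n) (hm0 : m ≠ 0)
    (hmarg : ∀ j : Fin n, (j : ℕ) < m → ∑ x, dbDens p α x * b2r (x j) = p) :
    ∑ x : Fin n → Bool, dbDens p α x * phat x m = p := by
  calc ∑ x, dbDens p α x * phat x m
      = (m : ℝ)⁻¹ * ∑ j ∈ {j : Fin n | ↑j < m}, ∑ x, dbDens p α x * b2r (x j) := by
        simp_rw [phat_eq_sum, mul_sum]
        rw [sum_comm]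
        exact sum_congr rfl fun j _ => sum_congr rfl fun x _ => by ring
    _ = (m : ℝ)⁻¹ * ∑ j ∈ {j : Fin n | ↑j < m}, p := by
        rw [sum_congr rfl fun j hj => hmarg j (mem_filter.1 hj).2]
    _ = p := by
        simp [Fin.card_filter_val_lt, min_eq_right hm, hm0]

variable {p α : ℝ} (hp0 : 0 < p) (hp1 : p < 1) (hα0 : 0 ≤ α)
  (hα : α ≤ min ((1 - p) / p) (p / (1 - p)))
include hp0 hp1 hα0 hα

theorem clip_affine_eq {t : ℝ} (ht0 : 0 ≤ t) (ht1 : t ≤ 1) :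
    min 1 (max 0 (p * (1 + α) - α * t)) = p * (1 + α) - α * t := by
  have hαp : α * p ≤ 1 - p := (le_div_iff₀ hp0).1 (hα.trans (min_le_left _ _))
  have hαq : α * (1 - p) ≤ p := (le_div_iff₀ (sub_pos.2 hp1)).1 (hα.trans (min_le_right _ _))
  rw [max_eq_right (by nlinarith), min_eq_right (by nlinarith)]

theorem dbq_eq_of_ne_zero (x : Fin n → Bool) {k : ℕ} (hk : k ≠ 0) :
    dbq p α x k = p * (1 + α) - α * phat x k := by
  rw [dbq, if_neg hk, clip_affine_eq hp0 hp1 hα0 hα (phat_nonneg x k) (phat_le_one x k)]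

theorem sum_dbDens_mul_b2r_eq (k : Fin n) :
    ∑ x : Fin n → Bool, dbDens p α x * b2r (x k) = p := by
  induction k using WellFoundedLT.induction with
  | _ k ih =>
    rw [sum_dbDens_mul_b2r_eq_sum_mul_dbq]
    by_cases hk : (k : ℕ) = 0
    · simp [dbq, hk, ← sum_mul, sum_dbDens_eq_one]
    calc ∑ x, dbDens p α x * dbq p α x k
        = ∑ x, (p * (1 + α) * dbDens p α x - α * (dbDens p α x * phat x k)) :=
          sum_congr rfl fun x _ => by rw [dbq_eq_of_ne_zero hp0 hp1 hα0 hα x hk]; ring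
      _ = p * (1 + α) * ∑ x, dbDens p α x - α * ∑ x, dbDens p α x * phat x k := by
          rw [sum_sub_distrib, mul_sum, mul_sum]
      _ = p := by
          rw [sum_dbDens_eq_one, sum_dbDens_mul_phat p α k.isLt.le hk ih]
          ring

end DBsample

/-- distribution preservation of DBsample (general n, 1-dimensional):
for 0 ≤ α ≤ min((1-p)/p, p/(1-p)), (i) no clipping ever occurs, i.e. the parameter
at each step equals p(1+α) - α·p̂ of the previous samples, and (ii) each draw
has marginal expectation p. -/
theorem dbsample_preserves_distribution (p α : ℝ) (hp0 : 0 < p) (hp1 : p < 1)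
    (hα0 : 0 ≤ α) (hα : α ≤ min ((1 - p) / p) (p / (1 - p))) (n : ℕ) :
    (∀ (x : Fin n → Bool) (k : ℕ), 1 ≤ k → k < n →
        dbq p α x k = p * (1 + α) - α * phat x k) ∧
      ∀ k : Fin n, ∑ x : Fin n → Bool, dbDens p α x * b2r (x k) = p :=
  ⟨fun x _ hk _ => dbq_eq_of_ne_zero hp0 hp1 hα0 hα x (Nat.one_le_iff_ne_zero.mp hk),
    sum_dbDens_mul_b2r_eq hp0 hp1 hα0 hα⟩
end

section
/- Discrepancy reduction of DBsample (full version, 1-dimensional): let p ∈ (0,1), n ≥ 2, and 0 < α ≤ min((1-p)/p, p/(1-p)). Let x_1,...,x_n be i.i.d. Bernoulli(p) and let z_1,...,z_n be generated by the DBsample process (q_1 = p, z_k | z_1,...,z_{k-1} ~ Bernoulli(p(1+α) - α·p̂_{k-1}) with p̂_{k-1} = (1/(k-1))Σ_{j<k} z_j). Then E[((1/n)Σz_k - p)²] < E[((1/n)Σx_k - p)²]. -/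
open Finset

/-!
Write `D_m = ∑_{j < m} (z_j - p)`. Given the first `m` draws, the next one is Bernoulli with
parameter `p - (α / m) D_m`: the bound on `α` rules out clipping. Hence `E[D_m] = 0` and
`E[D_{m+1}²] = (1 - 2α/m) E[D_m²] + p(1 - p)`. For i.i.d. draws (`α = 0`) this gives
`E[D_n²] = n p(1 - p)`. For `α > 0` the step `m = 1` already gives `E[D_2²] < 2 p(1 - p)`, and
no later step adds more than `p(1 - p)`. Expectations are finite sums over `Fin n → Bool`, and
conditioning on the first `m` draws amounts to pairing `x` with its flip at coordinate `m`.
-/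

namespace DBsample

variable {n : ℕ}

def flipAt (i : Fin n) (x : Fin n → Bool) : Fin n → Bool :=
  Function.update x i (!x i)

lemma flipAt_apply_self (i : Fin n) (x : Fin n → Bool) : flipAt i x i = !x i :=
  Function.update_self _ _ _

lemma flipAt_apply_of_ne {i j : Fin n} (h : j ≠ i) (x : Fin n → Bool) : flipAt i x j = x j :=
  Function.update_of_ne h _ _

lemma flipAt_involutive (i : Fin n) : Function.Involutive (flipAt i) := fun x => by
  rw [flipAt, flipAt_apply_self, Bool.not_not, flipAt, Function.update_idem,
    Function.update_eq_self]

lemma sum_bernoulli_mul (i : Fin n) (q : (Fin n → Bool) → ℝ) (F : Bool → (Fin n → Bool) → ℝ)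
    (hq : ∀ x, q (flipAt i x) = q x) (hF : ∀ b x, F b (flipAt i x) = F b x) :
    ∑ x, (if x i then q x else 1 - q x) * F (x i) x
      = 2⁻¹ * ∑ x, (q x * F true x + (1 - q x) * F false x) := by
  set w : (Fin n → Bool) → ℝ := fun x => (if x i then q x else 1 - q x) * F (x i) x
  have hpair : ∀ x, w x + w (flipAt i x) = q x * F true x + (1 - q x) * F false x := by
    intro x
    simp only [w, hq, hF, flipAt_apply_self]
    cases x i
    · simp only [Bool.not_false, Bool.false_eq_true, if_true, if_false]
      ring
    · simp only [Bool.not_true, Bool.false_eq_true, if_true, if_false]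
  have hflip : ∑ x, w (flipAt i x) = ∑ x, w x :=
    Equiv.sum_comp ((flipAt_involutive i).toPerm _) w
  rw [← Finset.sum_congr rfl fun x _ => hpair x, Finset.sum_add_distrib, hflip]
  ring

def DependsBelow (m : ℕ) (G : (Fin n → Bool) → ℝ) : Prop :=
  ∀ x y : Fin n → Bool, (∀ j : Fin n, (j : ℕ) < m → x j = y j) → G x = G y

lemma DependsBelow.flipAt_eq {m : ℕ} {G : (Fin n → Bool) → ℝ} (hG : DependsBelow m G)
    {i : Fin n} (hi : m ≤ i) (x : Fin n → Bool) : G (flipAt i x) = G x :=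
  hG _ _ fun j hj => flipAt_apply_of_ne (by omega) x

lemma dependsBelow_phat (m : ℕ) : DependsBelow m (fun x : Fin n → Bool => phat x m) :=
  fun x y h => by
    refine congrArg _ (Finset.sum_congr rfl fun j _ => ?_)
    by_cases hj : (j : ℕ) < m
    · rw [h j hj]
    · simp only [hj, false_and, if_false]

lemma dependsBelow_dbq (p α : ℝ) (m : ℕ) : DependsBelow m (fun x : Fin n → Bool => dbq p α x m) :=
  fun x y h => by
    simp only [dbq, show phat x m = phat y m from dependsBelow_phat m x y h]

noncomputable def stepWeight (p α : ℝ) (x : Fin n → Bool) (k : Fin n) : ℝ :=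
  if x k then dbq p α x k else 1 - dbq p α x k

/-- The law of the first `m` draws, made a probability on the whole cube by letting the other
coordinates be uniform. -/
noncomputable def partialDens (p α : ℝ) (m : ℕ) (x : Fin n → Bool) : ℝ :=
  ∏ k : Fin n, if (k : ℕ) < m then stepWeight p α x k else 2⁻¹

lemma partialDens_self (p α : ℝ) : partialDens p α n = dbDens (n := n) p α :=
  funext fun _ => Finset.prod_congr rfl fun k _ => if_pos k.isLt

lemma partialDens_succ (p α : ℝ) {m : ℕ} (hm : m < n) (x : Fin n → Bool) :
    partialDens p α (m + 1) x = 2 * stepWeight p α x ⟨m, hm⟩ * partialDens p α m x := by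
  have hfactor : ∀ k : Fin n, (if (k : ℕ) < m + 1 then stepWeight p α x k else 2⁻¹)
      = (if k = ⟨m, hm⟩ then 2 * stepWeight p α x k else 1)
        * (if (k : ℕ) < m then stepWeight p α x k else 2⁻¹) := by
    intro k
    rcases lt_trichotomy (k : ℕ) m with h | h | h
    · rw [if_pos (by omega), if_neg (Fin.ne_of_val_ne (by simp; omega)), if_pos h, one_mul]
    · rw [if_pos (by omega), if_pos (Fin.ext h), if_neg (by omega)]; ring
    · rw [if_neg (by omega), if_neg (Fin.ne_of_val_ne (by simp; omega)), if_neg (by omega),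
        one_mul]
  rw [partialDens, Finset.prod_congr rfl fun k _ => hfactor k, Finset.prod_mul_distrib,
    Finset.prod_ite_eq' Finset.univ, if_pos (Finset.mem_univ _), partialDens]

lemma dependsBelow_partialDens (p α : ℝ) (m : ℕ) : DependsBelow m (partialDens (n := n) p α m) :=
  fun x y h => Finset.prod_congr rfl fun k _ => by
    by_cases hk : (k : ℕ) < m
    · have hq : dbq p α x k = dbq p α y k :=
        dependsBelow_dbq p α k x y fun j hj => h j (hj.trans hk)
      rw [if_pos hk, if_pos hk, stepWeight, stepWeight, h k hk, hq]
    · rw [if_neg hk, if_neg hk]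

lemma partialDens_nonneg {p : ℝ} (hp0 : 0 ≤ p) (hp1 : p ≤ 1) (α : ℝ) (m : ℕ)
    (x : Fin n → Bool) : 0 ≤ partialDens p α m x := by
  have hq : ∀ k : ℕ, 0 ≤ dbq p α x k ∧ dbq p α x k ≤ 1 := fun k => by
    unfold dbq
    split_ifs
    · exact ⟨hp0, hp1⟩
    · exact ⟨le_min zero_le_one (le_max_left _ _), min_le_left _ _⟩
  refine Finset.prod_nonneg fun k _ => ?_
  split_ifs
  · unfold stepWeight
    split_ifs <;> linarith [hq k]
  · norm_num

lemma sum_partialDens_succ_mul (p α : ℝ) {m : ℕ} (hm : m < n) (F : Bool → (Fin n → Bool) → ℝ)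
    (hF : ∀ b, DependsBelow m (F b)) :
    ∑ x, partialDens p α (m + 1) x * F (x ⟨m, hm⟩) x
      = ∑ x, partialDens p α m x
          * (dbq p α x m * F true x + (1 - dbq p α x m) * F false x) := by
  have hμ := dependsBelow_partialDens p α m (n := n)
  calc ∑ x, partialDens p α (m + 1) x * F (x ⟨m, hm⟩) x
      = 2 * ∑ x, stepWeight p α x ⟨m, hm⟩ * (partialDens p α m x * F (x ⟨m, hm⟩) x) := by
        rw [Finset.mul_sum]
        exact Finset.sum_congr rfl fun x _ => by rw [partialDens_succ p α hm]; ring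
    _ = 2 * (2⁻¹ * ∑ x, (dbq p α x m * (partialDens p α m x * F true x)
          + (1 - dbq p α x m) * (partialDens p α m x * F false x))) :=
        congrArg _ <| sum_bernoulli_mul ⟨m, hm⟩ (fun x => dbq p α x m)
          (fun b x => partialDens p α m x * F b x)
          (fun x => (dependsBelow_dbq p α m).flipAt_eq le_rfl x)
          (fun b x => by
            rw [hμ.flipAt_eq (i := ⟨m, hm⟩) le_rfl, (hF b).flipAt_eq (i := ⟨m, hm⟩) le_rfl])
    _ = _ := by
        rw [← mul_assoc, mul_inv_cancel₀ two_ne_zero, one_mul]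
        exact Finset.sum_congr rfl fun x _ => by ring

lemma sum_partialDens (p α : ℝ) {m : ℕ} (hm : m ≤ n) : ∑ x, partialDens (n := n) p α m x = 1 := by
  induction m with
  | zero =>
    simp [partialDens, Finset.card_univ]
  | succ m ih =>
    have h := sum_partialDens_succ_mul p α hm (fun _ _ => 1) fun _ _ _ _ => rfl
    simp only [mul_one, add_sub_cancel] at h
    rw [h, ih (by omega)]

noncomputable def centredSum (p : ℝ) (m : ℕ) (x : Fin n → Bool) : ℝ :=
  ∑ j : Fin n with j.val < m, (b2r (x j) - p)

lemma centredSum_zero (p : ℝ) (x : Fin n → Bool) : centredSum p 0 x = 0 := by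
  simp [centredSum]

lemma centredSum_succ (p : ℝ) {m : ℕ} (hm : m < n) (x : Fin n → Bool) :
    centredSum p (m + 1) x = centredSum p m x + (b2r (x ⟨m, hm⟩) - p) := by
  have hterm : ∀ j : Fin n, (if (j : ℕ) < m + 1 then b2r (x j) - p else 0)
      = (if (j : ℕ) < m then b2r (x j) - p else 0)
        + (if ⟨m, hm⟩ = j then b2r (x j) - p else 0) := by
    intro j
    rcases lt_trichotomy (j : ℕ) m with h | h | h
    · rw [if_pos (by omega), if_pos h, if_neg (Fin.ne_of_val_ne (by simp; omega)), add_zero]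
    · rw [if_pos (by omega), if_neg (by omega), if_pos (Fin.ext h.symm), zero_add]
    · rw [if_neg (by omega), if_neg (by omega), if_neg (Fin.ne_of_val_ne (by simp; omega)),
        add_zero]
  rw [centredSum, centredSum, Finset.sum_filter, Finset.sum_filter,
    Finset.sum_congr rfl fun j _ => hterm j, Finset.sum_add_distrib, Finset.sum_ite_eq,
    if_pos (Finset.mem_univ _)]

lemma dependsBelow_centredSum (p : ℝ) (m : ℕ) : DependsBelow m (centredSum (n := n) p m) :=
  fun x y h => Finset.sum_congr rfl fun j hj => by rw [h j (Finset.mem_filter.mp hj).2]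

lemma card_filter_val_lt_of_le {m : ℕ} (hm : m ≤ n) : #{j : Fin n | j.val < m} = m := by
  rw [Fin.card_filter_val_lt, min_eq_right hm]

lemma centredSum_self (p : ℝ) (x : Fin n → Bool) :
    centredSum p n x = ∑ k, b2r (x k) - n * p := by
  rw [centredSum, Finset.filter_true_of_mem fun j _ => j.isLt, Finset.sum_sub_distrib,
    Finset.sum_const, Finset.card_univ, Fintype.card_fin, nsmul_eq_mul]

lemma centredSum_eq_mul_phat_sub (p : ℝ) {m : ℕ} (hm : m ≤ n) (x : Fin n → Bool) :
    centredSum p m x = m * (phat x m - p) := by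
  have hcount : ∑ j : Fin n with j.val < m, b2r (x j)
      = ∑ j : Fin n, if (j : ℕ) < m ∧ x j = true then (1 : ℝ) else 0 := by
    rw [Finset.sum_filter]
    exact Finset.sum_congr rfl fun j _ => by rw [ite_and, b2r]
  rcases Nat.eq_zero_or_pos m with rfl | hm0
  · simp [centredSum]
  · rw [centredSum, Finset.sum_sub_distrib, Finset.sum_const, card_filter_val_lt_of_le hm, nsmul_eq_mul,
      hcount, phat, mul_sub, ← mul_assoc, mul_inv_cancel₀ (by positivity), one_mul]

lemma centredSum_mem (p : ℝ) {m : ℕ} (hm : m ≤ n) (x : Fin n → Bool) :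
    -(m * p) ≤ centredSum p m x ∧ centredSum p m x ≤ m * (1 - p) := by
  have hb : ∀ j, -p ≤ b2r (x j) - p ∧ b2r (x j) - p ≤ 1 - p := fun j => by
    unfold b2r; split_ifs <;> constructor <;> linarith
  have hlo := Finset.card_nsmul_le_sum {j : Fin n | j.val < m} _ (-p) fun j _ => (hb j).1
  have hhi := Finset.sum_le_card_nsmul {j : Fin n | j.val < m} _ (1 - p) fun j _ => (hb j).2
  rw [card_filter_val_lt_of_le hm, nsmul_eq_mul] at hlo hhi
  exact ⟨by rw [centredSum]; linarith, hhi⟩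

lemma phat_mem {m : ℕ} (hm0 : 0 < m) (hm : m ≤ n) (x : Fin n → Bool) :
    0 ≤ phat x m ∧ phat x m ≤ 1 := by
  have h := centredSum_mem 0 hm x
  rw [centredSum_eq_mul_phat_sub 0 hm] at h
  have hm' : (0 : ℝ) < m := by exact_mod_cast hm0
  constructor <;> nlinarith [h.1, h.2]

lemma dbq_eq_sub_centredSum {p α : ℝ} (hα0 : 0 ≤ α) (hαp : α * p ≤ 1 - p)
    (hαp' : α * (1 - p) ≤ p) {m : ℕ} (hm : m ≤ n) (x : Fin n → Bool) :
    dbq p α x m = p - α / m * centredSum p m x := by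
  rcases Nat.eq_zero_or_pos m with rfl | hm0
  · simp [dbq]
  · obtain ⟨h0, h1⟩ := phat_mem hm0 hm x
    have hlo : 0 ≤ p * (1 + α) - α * phat x m := by nlinarith
    have hhi : p * (1 + α) - α * phat x m ≤ 1 := by nlinarith
    rw [dbq, if_neg hm0.ne', max_eq_right hlo, min_eq_right hhi,
      centredSum_eq_mul_phat_sub p hm, ← mul_assoc, div_mul_cancel₀ α (by positivity)]
    ring

variable {p α : ℝ}

lemma sum_partialDens_mul_centredSum (hα0 : 0 ≤ α) (hαp : α * p ≤ 1 - p)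
    (hαp' : α * (1 - p) ≤ p) {m : ℕ} (hm : m ≤ n) :
    ∑ x : Fin n → Bool, partialDens p α m x * centredSum p m x = 0 := by
  induction m with
  | zero => simp [centredSum_zero]
  | succ m ih =>
    replace hm : m < n := hm
    have hstep := sum_partialDens_succ_mul p α hm (fun b y => centredSum p m y + (b2r b - p))
      fun b x y h => congrArg (· + (b2r b - p)) (dependsBelow_centredSum p m x y h)
    have hcond : ∀ x, dbq p α x m * (centredSum p m x + (b2r true - p))
        + (1 - dbq p α x m) * (centredSum p m x + (b2r false - p))
        = (1 - α / m) * centredSum p m x := fun x => by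
      rw [dbq_eq_sub_centredSum hα0 hαp hαp' hm.le, b2r, b2r]
      simp only [if_true, Bool.false_eq_true, if_false]
      ring
    simp only [centredSum_succ p hm, hstep, hcond, mul_left_comm _ (1 - α / m), ← Finset.mul_sum,
      ih hm.le, mul_zero]

variable (n p α) in
noncomputable def secondMoment (m : ℕ) : ℝ :=
  ∑ x : Fin n → Bool, partialDens p α m x * centredSum p m x ^ 2

lemma secondMoment_zero : secondMoment n p α 0 = 0 := by
  simp [secondMoment, centredSum_zero]

lemma secondMoment_nonneg (hp0 : 0 ≤ p) (hp1 : p ≤ 1) (m : ℕ) : 0 ≤ secondMoment n p α m :=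
  Finset.sum_nonneg fun x _ => mul_nonneg (partialDens_nonneg hp0 hp1 α m x) (sq_nonneg _)

/-- At `m = 0` the factor is `1 - 2α/0 = 1`, which is harmless as `D_0 = 0`. -/
lemma secondMoment_succ (hα0 : 0 ≤ α) (hαp : α * p ≤ 1 - p) (hαp' : α * (1 - p) ≤ p)
    {m : ℕ} (hm : m < n) :
    secondMoment n p α (m + 1) = (1 - 2 * α / m) * secondMoment n p α m + p * (1 - p) := by
  have hstep := sum_partialDens_succ_mul p α hm (fun b y => (centredSum p m y + (b2r b - p)) ^ 2)
    fun b x y h => congrArg (fun t => (t + (b2r b - p)) ^ 2) (dependsBelow_centredSum p m x y h)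
  have hcond : ∀ x, partialDens p α m x * (dbq p α x m * (centredSum p m x + (b2r true - p)) ^ 2
        + (1 - dbq p α x m) * (centredSum p m x + (b2r false - p)) ^ 2)
      = (1 - 2 * α / m) * (partialDens p α m x * centredSum p m x ^ 2)
        + p * (1 - p) * partialDens p α m x
        - α / m * (1 - 2 * p) * (partialDens p α m x * centredSum p m x) := fun x => by
    rw [dbq_eq_sub_centredSum hα0 hαp hαp' hm.le, b2r, b2r]
    simp only [if_true, Bool.false_eq_true, if_false]
    ring
  simp only [secondMoment, centredSum_succ p hm, hstep, hcond, Finset.sum_sub_distrib,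
    Finset.sum_add_distrib, ← Finset.mul_sum, sum_partialDens p α hm.le,
    sum_partialDens_mul_centredSum hα0 hαp hαp' hm.le, mul_zero, mul_one, sub_zero]

lemma secondMoment_of_alpha_eq_zero (hp0 : 0 ≤ p) (hp1 : p ≤ 1) {m : ℕ} (hm : m ≤ n) :
    secondMoment n p 0 m = m * (p * (1 - p)) := by
  induction m with
  | zero => simp [secondMoment_zero]
  | succ m ih =>
    replace hm : m < n := hm
    rw [secondMoment_succ le_rfl (by linarith) (by linarith) hm, ih hm.le]
    push_cast
    ring

lemma secondMoment_lt (hp0 : 0 < p) (hp1 : p < 1) (hα0 : 0 < α) (hαp : α * p ≤ 1 - p)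
    (hαp' : α * (1 - p) ≤ p) {m : ℕ} (hm2 : 2 ≤ m) (hm : m ≤ n) :
    secondMoment n p α m < m * (p * (1 - p)) := by
  have hvar : 0 < p * (1 - p) := mul_pos hp0 (by linarith)
  induction m, hm2 using Nat.le_induction with
  | base =>
    have hgain := mul_pos hα0 hvar
    rw [secondMoment_succ hα0.le hαp hαp' hm, secondMoment_succ hα0.le hαp hαp' (by omega),
      secondMoment_zero]
    simp only [Nat.cast_zero, Nat.cast_one, Nat.cast_ofNat, div_zero, div_one, mul_zero, zero_add]
    linarith
  | succ m hm2 ih =>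
    have hdamp : 0 ≤ 2 * α / m * secondMoment n p α m :=
      mul_nonneg (by positivity) (secondMoment_nonneg hp0.le hp1.le m)
    rw [secondMoment_succ hα0.le hαp hαp' hm]
    push_cast
    nlinarith [ih (by omega)]

lemma sum_dbDens_mul_sq_eq (hn : n ≠ 0) :
    ∑ x : Fin n → Bool, dbDens p α x * ((n : ℝ)⁻¹ * (∑ k, b2r (x k)) - p) ^ 2
      = (n : ℝ)⁻¹ ^ 2 * secondMoment n p α n := by
  rw [secondMoment, partialDens_self, Finset.mul_sum]
  refine Finset.sum_congr rfl fun x _ => ?_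
  rw [centredSum_self]
  field_simp

lemma dbDens_of_alpha_eq_zero (hp0 : 0 ≤ p) (hp1 : p ≤ 1) (x : Fin n → Bool) :
    dbDens p 0 x = ∏ k, (if x k then p else 1 - p) := by
  refine Finset.prod_congr rfl fun k _ => ?_
  rw [dbq_eq_sub_centredSum le_rfl (by linarith) (by linarith) k.isLt.le, zero_div, zero_mul,
    sub_zero]

end DBsample

/-- discrepancy reduction of DBsample (full version, 1-dimensional):
for n ≥ 2 and 0 < α ≤ min((1-p)/p, p/(1-p)),
E[((1/n)Σ z_k - p)²] for DBsample draws is strictly smaller than for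
i.i.d. Bernoulli(p) draws. -/
theorem dbsample_discrepancy_reduction (p α : ℝ) (hp0 : 0 < p) (hp1 : p < 1)
    (hα0 : 0 < α) (hα : α ≤ min ((1 - p) / p) (p / (1 - p)))
    (n : ℕ) (hn : 2 ≤ n) :
    ∑ x : Fin n → Bool, dbDens p α x * ((n : ℝ)⁻¹ * (∑ k, b2r (x k)) - p) ^ 2
      < ∑ x : Fin n → Bool,
          (∏ k, (if x k then p else 1 - p)) * ((n : ℝ)⁻¹ * (∑ k, b2r (x k)) - p) ^ 2 := by
  have hαp : α * p ≤ 1 - p := (le_div_iff₀ hp0).mp (hα.trans (min_le_left _ _))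
  have hαp' : α * (1 - p) ≤ p := (le_div_iff₀ (sub_pos.mpr hp1)).mp (hα.trans (min_le_right _ _))
  simp_rw [← DBsample.dbDens_of_alpha_eq_zero hp0.le hp1.le]
  rw [DBsample.sum_dbDens_mul_sq_eq (by omega), DBsample.sum_dbDens_mul_sq_eq (by omega),
    DBsample.secondMoment_of_alpha_eq_zero hp0.le hp1.le le_rfl]
  exact mul_lt_mul_of_pos_left (DBsample.secondMoment_lt hp0 hp1 hα0 hαp hαp' hn le_rfl)
    (by positivity)
end

section
/- Variance of DBsurf in the distribution-preserving regime: let p ∈ (0,1), 0 < α ≤ min((1-p)/p, p/(1-p)), and let (x_1, x_2) be DBsample draws: x_1 ~ Bernoulli(p), x_2 | x_1 ~ Bernoulli(p(1+α) - α·x_1). With κ = P(x_1=1,x_2=0) + P(x_1=0,x_2=1) and g(x_1,x_2) = (p(1-p)/κ)·(f(x_1)-f(x_2))·(x_1-x_2), we have κ = 2p(1-p)(1+α) and Var[g] = (f(1)-f(0))²·p·(1-p)·(1/(2(1+α)) - p(1-p)). -/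
open Finset

/-- The two-sample difference estimator g(x₁,x₂) = (p(1-p)/κ)·(f(x₁)-f(x₂))·(x₁-x₂). -/
noncomputable def gEst (p κ : ℝ) (f : ℝ → ℝ) (x : Bool × Bool) : ℝ :=
  p * (1 - p) / κ * (f (b2r x.1) - f (b2r x.2)) * (b2r x.1 - b2r x.2)

/-- Joint density of two DBsample draws (without clipping):
x₁ ~ Bernoulli(p), x₂ | x₁ ~ Bernoulli(p(1+α) - α·x₁). -/
noncomputable def dbW2 (p α : ℝ) (x : Bool × Bool) : ℝ :=
  (if x.1 then p else 1 - p) *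
    (if x.2 then p * (1 + α) - α * b2r x.1 else 1 - (p * (1 + α) - α * b2r x.1))

/-!
The estimator vanishes on the diagonal and takes the same value `c = p(1-p)(f 1 - f 0)/κ` on
both off-diagonal cells, whose total mass is `κ`; hence its variance is
`κc²(1-κ) = (p(1-p)(f 1 - f 0))²(1-κ)/κ`. Without clipping each off-diagonal cell has mass
`p(1-p)(1+α)`, which gives `κ` and then the variance.
-/

@[simp] lemma b2r_true : b2r true = 1 := rfl

@[simp] lemma b2r_false : b2r false = 0 := rfl

lemma dbW2_true_false (p α : ℝ) : dbW2 p α (true, false) = p * (1 - p) * (1 + α) := by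
  simp only [dbW2, if_true, Bool.false_eq_true, if_false, b2r_true]
  ring

lemma dbW2_false_true (p α : ℝ) : dbW2 p α (false, true) = p * (1 - p) * (1 + α) := by
  simp only [dbW2, if_true, Bool.false_eq_true, if_false, b2r_false]
  ring

section OffDiagonal

variable (w g : Bool × Bool → ℝ) {c : ℝ}

lemma sum_mul_pow_of_eq_zero_on_diag (hdiag : ∀ b, g (b, b) = 0) (htf : g (true, false) = c)
    (hft : g (false, true) = c) {n : ℕ} (hn : n ≠ 0) :
    ∑ x : Bool × Bool, w x * g x ^ n = (w (true, false) + w (false, true)) * c ^ n := by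
  simp only [Fintype.sum_prod_type, Fintype.sum_bool, hdiag, htf, hft, zero_pow hn, mul_zero]
  ring

lemma variance_of_eq_zero_on_diag (hdiag : ∀ b, g (b, b) = 0) (htf : g (true, false) = c)
    (hft : g (false, true) = c) :
    ∑ x : Bool × Bool, w x * g x ^ 2 - (∑ x : Bool × Bool, w x * g x) ^ 2
      = (w (true, false) + w (false, true)) * c ^ 2 * (1 - (w (true, false) + w (false, true))) := by
  have h1 := sum_mul_pow_of_eq_zero_on_diag w g hdiag htf hft one_ne_zero
  rw [sum_mul_pow_of_eq_zero_on_diag w g hdiag htf hft two_ne_zero]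
  simp only [pow_one] at h1
  rw [h1]
  ring

end OffDiagonal

lemma gEst_diag (p κ : ℝ) (f : ℝ → ℝ) (b : Bool) : gEst p κ f (b, b) = 0 := by
  simp [gEst]

lemma gEst_true_false (p κ : ℝ) (f : ℝ → ℝ) :
    gEst p κ f (true, false) = p * (1 - p) / κ * (f 1 - f 0) := by
  simp [gEst]

lemma gEst_false_true (p κ : ℝ) (f : ℝ → ℝ) :
    gEst p κ f (false, true) = p * (1 - p) / κ * (f 1 - f 0) := by
  simp only [gEst, b2r_false, b2r_true]
  ring

lemma variance_gEst (w : Bool × Bool → ℝ) (p κ : ℝ) (f : ℝ → ℝ) (hκ : κ ≠ 0)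
    (hκw : κ = w (true, false) + w (false, true)) :
    ∑ x : Bool × Bool, w x * gEst p κ f x ^ 2 - (∑ x : Bool × Bool, w x * gEst p κ f x) ^ 2
      = (p * (1 - p) * (f 1 - f 0)) ^ 2 * (1 - κ) / κ := by
  rw [variance_of_eq_zero_on_diag w _ (gEst_diag p κ f) (gEst_true_false p κ f)
    (gEst_false_true p κ f), ← hκw]
  field_simp

theorem dbsurf_variance_preserving_regime_general (p α : ℝ) (hp0 : 0 < p) (hp1 : p < 1)
    (hα0 : 0 < α) (f : ℝ → ℝ)
    (κ : ℝ) (hκdef : κ = dbW2 p α (true, false) + dbW2 p α (false, true)) :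
    κ = 2 * p * (1 - p) * (1 + α) ∧
      (∑ x : Bool × Bool, dbW2 p α x * gEst p κ f x ^ 2)
          - (∑ x : Bool × Bool, dbW2 p α x * gEst p κ f x) ^ 2
        = (f 1 - f 0) ^ 2 * p * (1 - p) * (1 / (2 * (1 + α)) - p * (1 - p)) := by
  have hκ : κ = 2 * p * (1 - p) * (1 + α) := by
    rw [hκdef, dbW2_true_false, dbW2_false_true]
    ring
  have hκpos : 0 < κ := by
    rw [hκ]
    have : 0 < 1 - p := sub_pos.mpr hp1
    positivity
  refine ⟨hκ, ?_⟩
  rw [variance_gEst _ p κ f hκpos.ne' hκdef, hκ]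
  have : 1 + α ≠ 0 := by positivity
  field_simp

/-- variance of DBsurf in the distribution-preserving regime
0 < α ≤ min((1-p)/p, p/(1-p)): κ = P(1,0) + P(0,1) = 2p(1-p)(1+α) and
Var[g] = (f(1)-f(0))²·p·(1-p)·(1/(2(1+α)) - p(1-p)). -/
theorem dbsurf_variance_preserving_regime (p α : ℝ) (hp0 : 0 < p) (hp1 : p < 1)
    (hα0 : 0 < α) (hα : α ≤ min ((1 - p) / p) (p / (1 - p))) (f : ℝ → ℝ)
    (κ : ℝ) (hκdef : κ = dbW2 p α (true, false) + dbW2 p α (false, true)) :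
    κ = 2 * p * (1 - p) * (1 + α) ∧
      (∑ x : Bool × Bool, dbW2 p α x * gEst p κ f x ^ 2)
          - (∑ x : Bool × Bool, dbW2 p α x * gEst p κ f x) ^ 2
        = (f 1 - f 0) ^ 2 * p * (1 - p) * (1 / (2 * (1 + α)) - p * (1 - p)) :=
  dbsurf_variance_preserving_regime_general p α hp0 hp1 hα0 f κ hκdef
end

section
/- Zero variance of DBsurf in the high-correction regime: let p ∈ (0,1), α ≥ max((1-p)/p, p/(1-p)), and let (x_1, x_2) be DBsample draws: x_1 ~ Bernoulli(p), x_2 | x_1 ~ Bernoulli(clip(p(1+α) - α·x_1, 0, 1)). Then P(x_1=1, x_2=0) + P(x_1=0, x_2=1) = 1, i.e. x_2 = 1 - x_1 almost surely, and hence the normalized estimator g(x_1,x_2) = p(1-p)·(f(x_1)-f(x_2))·(x_1-x_2) has zero variance and equals the true gradient (f(1)-f(0))·p·(1-p) almost surely. -/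
open Finset

/-- Joint density of two DBsample draws with clipping:
x₁ ~ Bernoulli(p), x₂ | x₁ ~ Bernoulli(clip(p(1+α) - α·x₁, 0, 1)). -/
noncomputable def dbW2c (p α : ℝ) (x : Bool × Bool) : ℝ :=
  (if x.1 then p else 1 - p) *
    (if x.2 then min 1 (max 0 (p * (1 + α) - α * b2r x.1))
      else 1 - min 1 (max 0 (p * (1 + α) - α * b2r x.1)))

/-! Once `α` is large enough, clipping pins the conditional parameter of `x₂` to `0` when
`x₁ = 1` and to `1` when `x₁ = 0`, so the pair is antithetic: `x₂ = !x₁` almost surely. On that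
support the estimator is the constant `(f 1 - f 0) p (1 - p)`, and a random variable that is
almost surely constant has zero variance. -/

theorem sum_mul_sq_sub_sq_sum_eq_zero_of_eq_on_support {ι : Type*} [Fintype ι] {w g : ι → ℝ}
    {c : ℝ} (hw : ∑ i, w i = 1) (hg : ∀ i, w i ≠ 0 → g i = c) :
    ∑ i, w i * g i ^ 2 - (∑ i, w i * g i) ^ 2 = 0 := by
  have moment : ∀ n : ℕ, ∑ i, w i * g i ^ n = c ^ n := fun n =>
    calc ∑ i, w i * g i ^ n = ∑ i, w i * c ^ n := sum_congr rfl fun i _ => by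
          by_cases hi : w i = 0
          · simp [hi]
          · rw [hg i hi]
      _ = c ^ n := by rw [← sum_mul, hw, one_mul]
  have mean := moment 1
  simp only [pow_one] at mean
  rw [moment 2, mean, sub_self]

section Clip

variable {R : Type*} [LinearOrder R] [Zero R] [One R] [ZeroLEOneClass R] {t : R}

lemma clip_eq_one (ht : 1 ≤ t) : min 1 (max 0 t) = 1 := by
  rw [max_eq_right (zero_le_one.trans ht), min_eq_left ht]

lemma clip_eq_zero (ht : t ≤ 0) : min 1 (max 0 t) = 0 := by
  rw [max_eq_left ht, min_eq_right zero_le_one]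

end Clip

theorem sum_dbW2c (p α : ℝ) : ∑ x, dbW2c p α x = 1 := by
  simp only [Fintype.sum_prod_type, Fintype.sum_bool, dbW2c, if_true, Bool.false_eq_true,
    if_false]
  ring

section HighCorrection

variable {p α : ℝ}

lemma one_le_mul_one_add_of_div_le (hp0 : 0 < p) (hα : (1 - p) / p ≤ α) : 1 ≤ p * (1 + α) := by
  rw [div_le_iff₀ hp0] at hα
  linarith

lemma mul_one_add_sub_nonpos_of_div_le (hp1 : p < 1) (hα : p / (1 - p) ≤ α) :
    p * (1 + α) - α ≤ 0 := by
  rw [div_le_iff₀ (sub_pos.mpr hp1)] at hα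
  linarith

theorem dbW2c_true (h : p * (1 + α) - α ≤ 0) (b : Bool) :
    dbW2c p α (true, b) = if b then 0 else p := by
  cases b <;> simp [dbW2c, b2r, clip_eq_zero h]

theorem dbW2c_false (h : 1 ≤ p * (1 + α)) (b : Bool) :
    dbW2c p α (false, b) = if b then 1 - p else 0 := by
  cases b <;> simp [dbW2c, b2r, clip_eq_one h]

theorem snd_eq_not_fst_of_dbW2c_ne_zero (htrue : p * (1 + α) - α ≤ 0)
    (hfalse : 1 ≤ p * (1 + α)) {x : Bool × Bool} (hx : dbW2c p α x ≠ 0) : x.2 = !x.1 := by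
  obtain ⟨_ | _, _ | _⟩ := x <;> simp_all [dbW2c_true htrue, dbW2c_false hfalse]

end HighCorrection

theorem gEst_one_of_snd_eq_not_fst (p : ℝ) (f : ℝ → ℝ) {x : Bool × Bool} (hx : x.2 = !x.1) :
    gEst p 1 f x = (f 1 - f 0) * p * (1 - p) := by
  obtain ⟨x₁, x₂⟩ := x
  obtain rfl : x₂ = !x₁ := hx
  cases x₁ <;> simp [gEst, b2r] <;> ring

/-- zero variance of DBsurf in the high-correction regime
α ≥ max((1-p)/p, p/(1-p)): P(1,0)+P(0,1) = 1, x₂ = 1 - x₁ almost surely, the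
estimator g = p(1-p)(f(x₁)-f(x₂))(x₁-x₂) has zero variance and equals the
true gradient (f(1)-f(0))·p·(1-p) almost surely. -/
theorem dbsurf_zero_variance_high_correction (p α : ℝ) (hp0 : 0 < p) (hp1 : p < 1)
    (hα : max ((1 - p) / p) (p / (1 - p)) ≤ α) (f : ℝ → ℝ) :
    dbW2c p α (true, false) + dbW2c p α (false, true) = 1 ∧
    (∀ x : Bool × Bool, dbW2c p α x ≠ 0 → x.2 = !x.1) ∧
    (∑ x : Bool × Bool, dbW2c p α x * gEst p 1 f x ^ 2)
        - (∑ x : Bool × Bool, dbW2c p α x * gEst p 1 f x) ^ 2 = 0 ∧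
    (∀ x : Bool × Bool, dbW2c p α x ≠ 0 →
      gEst p 1 f x = (f 1 - f 0) * p * (1 - p)) := by
  have hfalse := one_le_mul_one_add_of_div_le hp0 ((le_max_left _ _).trans hα)
  have htrue := mul_one_add_sub_nonpos_of_div_le hp1 ((le_max_right _ _).trans hα)
  have hsupp : ∀ x, dbW2c p α x ≠ 0 → x.2 = !x.1 := fun x hx =>
    snd_eq_not_fst_of_dbW2c_ne_zero htrue hfalse hx
  have hconst : ∀ x, dbW2c p α x ≠ 0 → gEst p 1 f x = (f 1 - f 0) * p * (1 - p) :=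
    fun x hx => gEst_one_of_snd_eq_not_fst p f (hsupp x hx)
  refine ⟨?_, hsupp, sum_mul_sq_sub_sq_sum_eq_zero_of_eq_on_support (sum_dbW2c p α) hconst,
    hconst⟩
  rw [dbW2c_true htrue, dbW2c_false hfalse]
  simp
end

section
/- Monotone variance reduction in α: with the variance formulas V(α) of the two-sample DBsurf estimator—V(α) = C·(1/(2(1+α)) - p(1-p)) for 0 ≤ α ≤ m, V(α) = C·(max(p,1-p)/((1+α)max(p,1-p)+1) - p(1-p)) for m < α ≤ M, and V(α) = 0 for α ≥ M, where m = min((1-p)/p, p/(1-p)), M = max((1-p)/p, p/(1-p)), and C = (f(1)-f(0))²·p·(1-p) ≥ 0—the function V is monotone nonincreasing on [0, ∞), nonnegative, and the piecewise expressions agree at the boundary points α = m and α = M. -/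
/-!
With `n = min p (1 - p)` and `q = max p (1 - p)` one has `n + q = 1`, `n * q = p * (1 - p)`,
`m = n / q` and `M = q / n`. Hence `1 + m = 1 / q`, so both expressions equal `C * (q / 2 - n * q)`
at `α = m`, and `(1 + M) * q + 1 = 1 / n`, so the middle one vanishes at `α = M`. Each branch is
antitone in `α`, so `V`, glued without jumps at `m` and `M`, is antitone; as it vanishes beyond
`M`, it is nonnegative.
-/

open Set

theorem AntitoneOn.ite_le {α β : Type*} [LinearOrder α] [Preorder β] {f g : α → β} {s : Set α}
    {c : α} (hf : AntitoneOn f (s ∩ Iic c)) (hg : AntitoneOn g (s ∩ Ici c)) (hc : c ∈ s)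
    (hfg : f c = g c) : AntitoneOn (fun x => if x ≤ c then f x else g x) s := by
  intro x hx y hy hxy
  dsimp only
  split_ifs with hyc hxc hxc
  · exact hf ⟨hx, hxc⟩ ⟨hy, hyc⟩ hxy
  · exact absurd (hxy.trans hyc) hxc
  · have hcy := (not_le.1 hyc).le
    calc g y ≤ g c := hg ⟨hc, le_rfl⟩ ⟨hy, hcy⟩ hcy
      _ = f c := hfg.symm
      _ ≤ f x := hf ⟨hx, hxc⟩ ⟨hc, le_rfl⟩ hxc
  · exact hg ⟨hx, (not_le.1 hxc).le⟩ ⟨hy, (not_le.1 hyc).le⟩ hxy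

theorem AntitoneOn.nonneg_of_eq_zero_of_gt {α β : Type*} [LinearOrder α] [NoMaxOrder α]
    [Preorder β] [Zero β] {f : α → β} {a b : α} (hf : AntitoneOn f (Ici a))
    (hzero : ∀ x, b < x → f x = 0) : ∀ x ∈ Ici a, 0 ≤ f x := by
  intro x hx
  obtain ⟨y, hy⟩ := exists_gt (max x b)
  have hxy : x ≤ y := (le_max_left x b).trans hy.le
  calc 0 = f y := (hzero y ((le_max_right x b).trans_lt hy)).symm
    _ ≤ f x := hf hx (mem_Ici.2 ((mem_Ici.1 hx).trans hxy)) hxy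

section
variable {K : Type*} [Field K] [LinearOrder K] [IsStrictOrderedRing K] {a b : K}

theorem div_le_div_swap_of_le (ha : 0 < a) (h : a ≤ b) : a / b ≤ b / a := by
  rw [div_le_div_iff₀ (ha.trans_le h) ha]
  exact mul_le_mul h h ha.le (ha.le.trans h)

theorem min_div_div_eq_min_div_max (ha : 0 < a) (hb : 0 < b) :
    min (b / a) (a / b) = min a b / max a b := by
  rcases le_total a b with h | h
  · rw [min_eq_right (div_le_div_swap_of_le ha h), min_eq_left h, max_eq_right h]
  · rw [min_eq_left (div_le_div_swap_of_le hb h), min_eq_right h, max_eq_left h]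

theorem max_div_div_eq_max_div_min (ha : 0 < a) (hb : 0 < b) :
    max (b / a) (a / b) = max a b / min a b := by
  rcases le_total a b with h | h
  · rw [max_eq_left (div_le_div_swap_of_le ha h), min_eq_left h, max_eq_right h]
  · rw [max_eq_right (div_le_div_swap_of_le hb h), min_eq_right h, max_eq_left h]

variable {n q : K}

theorem one_div_two_mul_one_add_div_eq (hq : 0 < q) (h : n + q = 1) :
    1 / (2 * (1 + n / q)) = q / ((1 + n / q) * q + 1) := by
  have h_one_add : 1 + n / q = 1 / q := by field_simp; linear_combination h
  rw [h_one_add]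
  field_simp
  norm_num

theorem div_one_add_div_mul_add_one_eq (hn : 0 < n) (h : n + q = 1) :
    q / ((1 + q / n) * q + 1) = n * q := by
  have h_denom : (1 + q / n) * q + 1 = 1 / n := by
    field_simp
    linear_combination (q + 1) * h
  rw [h_denom]
  field_simp

theorem antitoneOn_div_one_add_mul_add_one (hq : 0 ≤ q) :
    AntitoneOn (fun α : K => q / ((1 + α) * q + 1)) (Ici 0) := by
  intro x hx y _ hxy
  rw [mem_Ici] at hx
  dsimp only
  gcongr

theorem antitoneOn_one_div_two_mul_one_add :
    AntitoneOn (fun α : K => 1 / (2 * (1 + α))) (Ici 0) := by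
  intro x hx y _ hxy
  rw [mem_Ici] at hx
  dsimp only
  gcongr

end

/-- monotone variance reduction in α: the piecewise variance function
V of the two-sample DBsurf estimator is monotone nonincreasing on [0,∞),
nonnegative, and the piecewise expressions agree at the boundary points
α = m := min((1-p)/p, p/(1-p)) and α = M := max((1-p)/p, p/(1-p)). -/
theorem dbsurf_variance_monotone (p : ℝ) (hp0 : 0 < p) (hp1 : p < 1) (f : ℝ → ℝ) :
    let m : ℝ := min ((1 - p) / p) (p / (1 - p))
    let M : ℝ := max ((1 - p) / p) (p / (1 - p))
    let C : ℝ := (f 1 - f 0) ^ 2 * p * (1 - p)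
    let V : ℝ → ℝ := fun α =>
      if α ≤ m then C * (1 / (2 * (1 + α)) - p * (1 - p))
      else if α ≤ M then
        C * (max p (1 - p) / ((1 + α) * max p (1 - p) + 1) - p * (1 - p))
      else 0
    AntitoneOn V (Set.Ici 0) ∧
    (∀ α ∈ Set.Ici (0 : ℝ), 0 ≤ V α) ∧
    C * (1 / (2 * (1 + m)) - p * (1 - p))
      = C * (max p (1 - p) / ((1 + m) * max p (1 - p) + 1) - p * (1 - p)) ∧
    C * (max p (1 - p) / ((1 + M) * max p (1 - p) + 1) - p * (1 - p)) = 0 := by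
  intro m M C V
  have hp1' : 0 < 1 - p := sub_pos.2 hp1
  have hnq : min p (1 - p) + max p (1 - p) = 1 := by rw [min_add_max]; ring
  have hn : 0 < min p (1 - p) := lt_min hp0 hp1'
  have hq : 0 < max p (1 - p) := hp0.trans_le (le_max_left _ _)
  have hm : m = min p (1 - p) / max p (1 - p) := min_div_div_eq_min_div_max hp0 hp1'
  have hM : M = max p (1 - p) / min p (1 - p) := max_div_div_eq_max_div_min hp0 hp1'
  have hmM : m ≤ M := min_le_max
  have hm0 : 0 ≤ m := hm ▸ by positivity
  have hC : 0 ≤ C := by positivity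
  have hbridge : C * (1 / (2 * (1 + m)) - p * (1 - p))
      = C * (max p (1 - p) / ((1 + m) * max p (1 - p) + 1) - p * (1 - p)) := by
    rw [hm, one_div_two_mul_one_add_div_eq hq hnq]
  have hzero : C * (max p (1 - p) / ((1 + M) * max p (1 - p) + 1) - p * (1 - p)) = 0 := by
    rw [hM, div_one_add_div_mul_add_one_eq hn hnq, min_mul_max, sub_self, mul_zero]
  have hA : Monotone fun x : ℝ => C * (x - p * (1 - p)) := fun _ _ h =>
    mul_le_mul_of_nonneg_left (sub_le_sub_right h _) hC
  have hV : AntitoneOn V (Ici 0) := by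
    refine AntitoneOn.ite_le ?_ (AntitoneOn.ite_le ?_ antitoneOn_const ⟨hm0.trans hmM, hmM⟩ hzero)
      hm0 (by rw [if_pos hmM]; exact hbridge)
    · exact (hA.comp_antitoneOn antitoneOn_one_div_two_mul_one_add).mono inter_subset_left
    · exact (hA.comp_antitoneOn (antitoneOn_div_one_add_mul_add_one hq.le)).mono
        (inter_subset_left.trans inter_subset_left)
  refine ⟨hV, hV.nonneg_of_eq_zero_of_gt (b := M) fun x hx => ?_, hbridge, hzero⟩
  simp only [V, if_neg (hmM.trans_lt hx).not_ge, if_neg hx.not_ge]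
end
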